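/- arXiv:2404.18029 — 3 statements merged into one kernel-verified Lean document; each statement's English description precedes it below -/
import Mathlib

section
/- If X is an integrable real-valued random variable and p ∈ (0,1), then the equation e - E[X] = ((2p-1)/(1-p)) · E[(X - e)₊] has a unique real solution e (the p-expectile of X). -/
open MeasureTheory

/-- If `X` is an integrable real-valued random variable and `p ∈ (0,1)`, the equation
`e - E[X] = ((2p-1)/(1-p)) · E[(X - e)₊]` has a unique real solution `e` (the `p`-expectile). -/
theorem expectile_existsUnique {Ω : Type*} [MeasurableSpace Ω]
    (μ : Measure Ω) [IsProbabilityMeasure μ]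
    (X : Ω → ℝ) (hX : Integrable X μ) (p : ℝ) (hp : p ∈ Set.Ioo (0 : ℝ) 1) :
    ∃! e : ℝ, e - ∫ ω, X ω ∂μ
      = ((2 * p - 1) / (1 - p)) * ∫ ω, max (X ω - e) 0 ∂μ := by
  obtain ⟨hp0, hp1⟩ := hp
  have h1p : (0:ℝ) < 1 - p := by linarith
  set c : ℝ := (2 * p - 1) / (1 - p) with hc
  set m : ℝ := ∫ ω, X ω ∂μ with hm
  set g : ℝ → ℝ := fun e => ∫ ω, max (X ω - e) 0 ∂μ with hg
  have hint : ∀ e : ℝ, Integrable (fun ω => max (X ω - e) 0) μ := fun e =>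
    (hX.sub (integrable_const e)).pos_part
  -- monotonicity and Lipschitz bounds on g
  have hgd : ∀ e1 e2 : ℝ, e1 ≤ e2 → 0 ≤ g e1 - g e2 ∧ g e1 - g e2 ≤ e2 - e1 := by
    intro e1 e2 h
    have hsub : g e1 - g e2 = ∫ ω, (max (X ω - e1) 0 - max (X ω - e2) 0) ∂μ :=
      (integral_sub (hint e1) (hint e2)).symm
    constructor
    · rw [hsub]
      apply integral_nonneg
      intro ω
      simp only [Pi.zero_apply, sub_nonneg]
      exact max_le_max (by linarith) le_rfl
    · rw [hsub]
      calc ∫ ω, (max (X ω - e1) 0 - max (X ω - e2) 0) ∂μ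
          ≤ ∫ _ω, (e2 - e1) ∂μ := by
            apply integral_mono ((hint e1).sub (hint e2)) (integrable_const _)
            intro ω
            have h1 := le_max_left (X ω - e2) (0:ℝ)
            have h2 := le_max_right (X ω - e2) (0:ℝ)
            have h3 : max (X ω - e1) 0 ≤ max (X ω - e2) 0 + (e2 - e1) :=
              max_le (by linarith) (by linarith)
            simp only [Pi.sub_apply]
            linarith
        _ = e2 - e1 := by simp
  set k : ℝ := min 1 (p / (1 - p)) with hk
  have hk0 : 0 < k := lt_min one_pos (div_pos hp0 h1p)
  have hcp : 1 + c = p / (1 - p) := by rw [hc]; field_simp; ring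
  have hF : ∀ e1 e2 : ℝ, e1 ≤ e2 →
      k * (e2 - e1) ≤ (e2 - m - c * g e2) - (e1 - m - c * g e1) := by
    intro e1 e2 h
    obtain ⟨hd0, hd1⟩ := hgd e1 e2 h
    have hk1 : k ≤ 1 := min_le_left _ _
    have hk2 : k ≤ 1 + c := by rw [hcp]; exact min_le_right _ _
    rcases le_or_gt 0 c with hc0 | hc0
    · have h1 : 0 ≤ c * (g e1 - g e2) := mul_nonneg hc0 hd0
      have h2 : k * (e2 - e1) ≤ 1 * (e2 - e1) :=
        mul_le_mul_of_nonneg_right hk1 (by linarith)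
      nlinarith
    · have h1 : c * (e2 - e1) ≤ c * (g e1 - g e2) :=
        mul_le_mul_of_nonpos_left hd1 hc0.le
      have h2 : k * (e2 - e1) ≤ (1 + c) * (e2 - e1) :=
        mul_le_mul_of_nonneg_right hk2 (by linarith)
      nlinarith
  -- continuity
  have hlip : LipschitzWith 1 g := by
    apply LipschitzWith.of_dist_le_mul
    intro e1 e2
    rw [Real.dist_eq, Real.dist_eq, NNReal.coe_one, one_mul]
    rcases le_total e1 e2 with h | h
    · obtain ⟨h0, h1⟩ := hgd e1 e2 h
      rw [abs_of_nonneg h0, abs_of_nonpos (by linarith : e1 - e2 ≤ 0)]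
      linarith
    · obtain ⟨h0, h1⟩ := hgd e2 e1 h
      rw [abs_of_nonpos (by linarith : g e1 - g e2 ≤ 0),
        abs_of_nonneg (by linarith : (0:ℝ) ≤ e1 - e2)]
      linarith
  have hcont : Continuous fun e : ℝ => e - m - c * g e :=
    (continuous_id.sub continuous_const).sub (continuous_const.mul hlip.continuous)
  -- existence via IVT
  set F : ℝ → ℝ := fun e => e - m - c * g e with hFdef
  set R : ℝ := |F 0| / k with hR
  have hR0 : 0 ≤ R := div_nonneg (abs_nonneg _) hk0.le
  have hkR : k * R = |F 0| := by
    rw [hR]; field_simp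
  have hFR : 0 ≤ F R := by
    have h := hF 0 R hR0
    have h0 : -(|F 0|) ≤ F 0 := neg_abs_le _
    have : F R - F 0 = (R - m - c * g R) - (0 - m - c * g 0) := by simp [hFdef]
    rw [← this] at h
    linarith [h, hkR]
  have hFnR : F (-R) ≤ 0 := by
    have h := hF (-R) 0 (by linarith)
    have h0 : F 0 ≤ |F 0| := le_abs_self _
    have : F 0 - F (-R) = (0 - m - c * g 0) - ((-R) - m - c * g (-R)) := by simp [hFdef]
    rw [← this] at h
    have : k * (0 - -R) = |F 0| := by rw [← hkR]; ring
    linarith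
  obtain ⟨e, -, he⟩ := intermediate_value_Icc (by linarith : -R ≤ R)
    hcont.continuousOn ⟨hFnR, hFR⟩
  refine ⟨e, ?_, ?_⟩
  · have : e - m - c * g e = 0 := he
    show e - m = c * g e
    linarith
  · intro y hy
    have hy' : y - m - c * g y = 0 := by
      have : y - m = c * g y := hy
      linarith
    have he' : e - m - c * g e = 0 := he
    rcases lt_trichotomy y e with h | h | h
    · exfalso
      have := hF y e h.le
      nlinarith
    · exact h
    · exfalso
      have := hF e y h.le
      nlinarith
end

section
/- Let F be the distribution function of a nonnegative random variable with survival function F̄ regularly varying with index -α, α > 1. For fixed z ∈ (0,1) and β > 0, define V_β(zt) = ∫₀^{zt} ((1 - y/t)^{-β} - 1) dF(y). Then V_β(zt) ~ β t^{-1} μ(t) as t → ∞, where μ(t) = ∫₀^t x dF(x). -/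
open MeasureTheory Filter Set Topology
open scoped ENNReal

/-!
Since `F̄(2t) / F̄(t) → 2^{-α} < 1/2`, the tail `F̄(2ⁿ T)` eventually decays faster than
`2⁻ⁿ`; bounding `y` by `T + ∑ₙ 2ⁿ T 1{y > 2ⁿ T}` then shows that the mean `m` is finite.
Next, `(1 - u)^{-β} - 1` is `βu + o(u)` as `u → 0` and at most `Cu` on `[0, z]` (mean value
theorem), so dominated convergence gives `t V_β(zt) → β m`, while `μ(t) → m`.
-/

lemma ofReal_min_two_pow_le_sum_indicator {T : ℝ} (hT : 0 ≤ T) (y : ℝ) (m : ℕ) :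
    ENNReal.ofReal (min y (2 ^ m * T)) ≤ ENNReal.ofReal T + ∑ n ∈ Finset.range m,
      (Ioi (2 ^ n * T)).indicator (fun _ ↦ ENNReal.ofReal (2 ^ n * T)) y := by
  induction m with
  | zero => simp
  | succ m ih =>
    rw [Finset.sum_range_succ, ← add_assoc]
    grw [← ih]
    by_cases hy : y ≤ 2 ^ m * T
    · have : 2 ^ m * T ≤ 2 ^ (m + 1) * T := by gcongr <;> norm_num
      simp [hy, hy.trans this]
    · rw [not_le] at hy
      rw [indicator_of_mem (mem_Ioi.2 hy), min_eq_right hy.le,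
        ← ENNReal.ofReal_add (by positivity) (by positivity)]
      exact ENNReal.ofReal_le_ofReal ((min_le_right _ _).trans_eq (by ring))

lemma ofReal_le_add_tsum_indicator {T : ℝ} (hT : 0 < T) (y : ℝ) :
    ENNReal.ofReal y ≤ ENNReal.ofReal T +
      ∑' n : ℕ, (Ioi (2 ^ n * T)).indicator (fun _ ↦ ENNReal.ofReal (2 ^ n * T)) y := by
  obtain ⟨m, hm⟩ := pow_unbounded_of_one_lt (y / T) (one_lt_two (α := ℝ))
  have hym : y ≤ 2 ^ m * T := by rw [div_lt_iff₀ hT] at hm; exact hm.le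
  calc ENNReal.ofReal y = ENNReal.ofReal (min y (2 ^ m * T)) := by rw [min_eq_left hym]
    _ ≤ _ := ofReal_min_two_pow_le_sum_indicator hT.le y m
    _ ≤ _ := by gcongr; exact ENNReal.sum_le_tsum _

lemma lintegral_ofReal_le_add_tsum_measure_Ioi (μ : Measure ℝ) {T : ℝ} (hT : 0 < T) :
    ∫⁻ y, ENNReal.ofReal y ∂μ ≤ ENNReal.ofReal T * μ univ +
      ∑' n : ℕ, ENNReal.ofReal (2 ^ n * T) * μ (Ioi (2 ^ n * T)) := by
  calc ∫⁻ y, ENNReal.ofReal y ∂μ ≤ ∫⁻ y, (ENNReal.ofReal T +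
        ∑' n : ℕ, (Ioi (2 ^ n * T)).indicator (fun _ ↦ ENNReal.ofReal (2 ^ n * T)) y) ∂μ :=
        lintegral_mono (ofReal_le_add_tsum_indicator hT)
    _ = _ := by
      rw [lintegral_add_left measurable_const, lintegral_tsum, lintegral_const]
      · simp_rw [lintegral_indicator_const measurableSet_Ioi]
      · exact fun n ↦ (measurable_const.indicator measurableSet_Ioi).aemeasurable

lemma integrable_id_of_measure_Ioi_le_geometric {μ : Measure ℝ} [IsFiniteMeasure μ]
    (hnonneg : ∀ᵐ y ∂μ, 0 ≤ y) {T : ℝ} (hT : 0 < T) {r : ℝ≥0∞} (hr : 2 * r < 1)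
    (htail : ∀ n : ℕ, μ (Ioi (2 ^ n * T)) ≤ r ^ n) : Integrable id μ := by
  refine ⟨aestronglyMeasurable_id, (hasFiniteIntegral_iff_ofReal hnonneg).2 ?_⟩
  refine (lintegral_ofReal_le_add_tsum_measure_Ioi μ hT).trans_lt ?_
  have hgeom : ∑' n : ℕ, ENNReal.ofReal (2 ^ n * T) * μ (Ioi (2 ^ n * T)) ≤
      ENNReal.ofReal T * ∑' n : ℕ, (2 * r) ^ n := by
    rw [← ENNReal.tsum_mul_left]
    refine ENNReal.tsum_le_tsum fun n ↦ ?_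
    rw [ENNReal.ofReal_mul (by positivity), mul_pow, mul_comm (ENNReal.ofReal _), mul_assoc]
    gcongr
    · simp
    · exact htail n
  exact ENNReal.add_lt_top.2 ⟨by finiteness,
    hgeom.trans_lt (ENNReal.mul_lt_top ENNReal.ofReal_lt_top (tsum_geometric_lt_top.2 hr))⟩

lemma measure_Ioi_two_pow_mul_le {μ : Measure ℝ} [IsProbabilityMeasure μ] {T : ℝ}
    (hT : 0 ≤ T) {r : ℝ≥0∞} (hdoubling : ∀ t ≥ T, μ (Ioi (t * 2)) ≤ r * μ (Ioi t))
    (n : ℕ) :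
    μ (Ioi (2 ^ n * T)) ≤ r ^ n := by
  induction n with
  | zero => simpa using prob_le_one
  | succ n ih =>
    calc μ (Ioi (2 ^ (n + 1) * T)) = μ (Ioi (2 ^ n * T * 2)) := by ring_nf
      _ ≤ r * μ (Ioi (2 ^ n * T)) :=
        hdoubling _ (le_mul_of_one_le_left hT (one_le_pow₀ one_le_two))
      _ ≤ r ^ (n + 1) := by rw [pow_succ']; gcongr

lemma exists_measure_Ioi_le_geometric {μ : Measure ℝ} [IsProbabilityMeasure μ]
    (hpos : ∀ t : ℝ, 0 < (μ (Ioi t)).toReal) {L : ℝ} (hL : L < 2⁻¹)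
    (hratio : Tendsto (fun t : ℝ ↦ (μ (Ioi (t * 2))).toReal / (μ (Ioi t)).toReal) atTop
      (𝓝 L)) :
    ∃ T > 0, ∃ r : ℝ≥0∞, 2 * r < 1 ∧ ∀ n : ℕ, μ (Ioi (2 ^ n * T)) ≤ r ^ n := by
  obtain ⟨r, hLr, hr⟩ := exists_between hL
  obtain ⟨T, hT⟩ := eventually_atTop.1 (hratio.eventually_lt_const hLr)
  refine ⟨max T 1, by positivity, ENNReal.ofReal r, ?_,
    measure_Ioi_two_pow_mul_le (by positivity) ?_⟩
  · rw [← ENNReal.ofReal_ofNat 2, ← ENNReal.ofReal_mul zero_le_two, ENNReal.ofReal_lt_one]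
    linarith
  · intro t ht
    have hlt := (div_lt_iff₀ (hpos t)).1 (hT t (le_of_max_le_left ht))
    rw [← ENNReal.ofReal_toReal (measure_ne_top μ (Ioi (t * 2))),
      ← ENNReal.ofReal_toReal (measure_ne_top μ (Ioi t)),
      ← ENNReal.ofReal_mul' ENNReal.toReal_nonneg]
    exact ENNReal.ofReal_le_ofReal hlt.le

lemma hasDerivAt_one_sub_rpow_neg (β : ℝ) {u : ℝ} (hu : u < 1) :
    HasDerivAt (fun v : ℝ ↦ (1 - v) ^ (-β)) (β * (1 - u) ^ (-β - 1)) u := by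
  have := ((hasDerivAt_id u).const_sub 1).rpow_const (p := -β) (Or.inl (sub_pos.2 hu).ne')
  exact this.congr_deriv (by simp)

lemma one_sub_rpow_neg_sub_one_le {β z u : ℝ} (hβ : 0 ≤ β) (hz : z < 1) (hu₀ : 0 ≤ u)
    (huz : u ≤ z) : (1 - u) ^ (-β) - 1 ≤ β * (1 - z) ^ (-β - 1) * u := by
  have hderiv : ∀ v ∈ Icc 0 z,
      HasDerivAt (fun v : ℝ ↦ (1 - v) ^ (-β)) (β * (1 - v) ^ (-β - 1)) v :=
    fun v hv ↦ hasDerivAt_one_sub_rpow_neg β (hv.2.trans_lt hz)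
  have := (convex_Icc 0 z).image_sub_le_mul_sub_of_deriv_le
    (fun v hv ↦ (hderiv v hv).continuousAt.continuousWithinAt)
    (fun v hv ↦ (hderiv v (interior_subset hv)).differentiableAt.differentiableWithinAt)
    (C := β * (1 - z) ^ (-β - 1)) ?_ 0 (left_mem_Icc.2 (hu₀.trans huz)) u ⟨hu₀, huz⟩ hu₀
  · simpa using this
  · rw [interior_Icc]
    intro v hv
    rw [(hderiv v (Ioo_subset_Icc_self hv)).deriv]
    exact mul_le_mul_of_nonneg_left
      (Real.rpow_le_rpow_of_nonpos (by linarith) (by linarith [hv.2]) (by linarith)) hβ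

lemma tendsto_mul_one_sub_div_rpow_neg_sub_one (β y : ℝ) :
    Tendsto (fun t : ℝ ↦ t * ((1 - y / t) ^ (-β) - 1)) atTop (𝓝 (β * y)) := by
  have hderiv : HasDerivAt (fun s : ℝ ↦ (1 - y * s) ^ (-β)) (β * y) 0 := by
    have := (hasDerivAt_one_sub_rpow_neg β (u := y * 0) (by simp)).comp 0
      ((hasDerivAt_id (0 : ℝ)).const_mul y)
    exact this.congr_deriv (by simp)
  have := hderiv.tendsto_slope_zero_right.comp tendsto_inv_atTop_nhdsGT_zero
  refine this.congr' ?_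
  filter_upwards [eventually_ne_atTop 0] with t ht
  simp [div_eq_mul_inv]

lemma tendsto_mul_setIntegral_Icc_one_sub_div_rpow_neg_sub_one {μ : Measure ℝ}
    (hint : Integrable id μ) (hnonneg : ∀ᵐ y ∂μ, 0 ≤ y) {z β : ℝ} (hz : z ∈ Ioo 0 1)
    (hβ : 0 ≤ β) :
    Tendsto (fun t : ℝ ↦ t * ∫ y in Icc 0 (z * t), ((1 - y / t) ^ (-β) - 1) ∂μ) atTop
      (𝓝 (β * ∫ y, y ∂μ)) := by
  have hF (t : ℝ) : t * ∫ y in Icc 0 (z * t), ((1 - y / t) ^ (-β) - 1) ∂μ =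
      ∫ y, (Icc 0 (z * t)).indicator (fun y ↦ t * ((1 - y / t) ^ (-β) - 1)) y ∂μ := by
    rw [integral_indicator measurableSet_Icc, integral_const_mul]
  simp_rw [hF, ← integral_const_mul]
  refine tendsto_integral_filter_of_dominated_convergence (fun y ↦ β * (1 - z) ^ (-β - 1) * y)
    (Eventually.of_forall fun t ↦ ?_) ?_ (hint.const_mul _) ?_
  · exact (Measurable.indicator (by fun_prop) measurableSet_Icc).aestronglyMeasurable
  · filter_upwards [eventually_gt_atTop 0] with t ht
    filter_upwards [hnonneg] with y hy
    by_cases hyt : y ∈ Icc 0 (z * t)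
    · have hu : y / t ≤ z := (div_le_iff₀ ht).2 hyt.2
      have hlow : 0 ≤ (1 - y / t) ^ (-β) - 1 := sub_nonneg.2 <|
        Real.one_le_rpow_of_pos_of_le_one_of_nonpos (by linarith [hz.2])
          (by linarith [div_nonneg hy ht.le]) (by linarith)
      have hupp := one_sub_rpow_neg_sub_one_le hβ hz.2 (div_nonneg hy ht.le) hu
      rw [indicator_of_mem hyt, Real.norm_of_nonneg (mul_nonneg ht.le hlow)]
      calc t * ((1 - y / t) ^ (-β) - 1) ≤ t * (β * (1 - z) ^ (-β - 1) * (y / t)) := by gcongr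
        _ = β * (1 - z) ^ (-β - 1) * y := by field_simp
    · rw [indicator_of_notMem hyt, norm_zero]
      have : 0 ≤ (1 - z) ^ (-β - 1) := Real.rpow_nonneg (by linarith [hz.2]) _
      positivity
  · filter_upwards [hnonneg] with y hy
    refine (tendsto_mul_one_sub_div_rpow_neg_sub_one β y).congr' ?_
    filter_upwards [eventually_ge_atTop (y / z)] with t ht
    rw [indicator_of_mem (show y ∈ Icc 0 (z * t) from ⟨hy, (div_le_iff₀' hz.1).1 ht⟩)]

/-- For a nonnegative distribution with regularly varying tail of index `-α`, `α > 1`,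
`V_β(zt) = ∫₀^{zt} ((1-y/t)^{-β} - 1) dF(y)` satisfies `V_β(zt) ~ β t⁻¹ μ(t)` as `t → ∞`. -/
theorem Vbeta_asymptotic (μ : Measure ℝ) [IsProbabilityMeasure μ] (hsupp : μ (Iio 0) = 0)
    (α : ℝ) (hα : 1 < α)
    (hpos : ∀ t : ℝ, 0 < (μ (Ioi t)).toReal)
    (hrv : ∀ x : ℝ, 0 < x → Tendsto (fun t : ℝ =>
        (μ (Ioi (t * x))).toReal / (μ (Ioi t)).toReal) atTop (nhds (x ^ (-α))))
    (z β : ℝ) (hz : z ∈ Ioo (0 : ℝ) 1) (hβ : 0 < β) :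
    Tendsto (fun t : ℝ =>
        (∫ y in Icc 0 (z * t), ((1 - y / t) ^ (-β) - 1) ∂μ)
          / (β * t⁻¹ * ∫ y in Iic t, y ∂μ)) atTop (nhds 1) := by
  have hnonneg : ∀ᵐ y ∂μ, 0 ≤ y := ae_iff.2 (measure_mono_null (fun _ ↦ not_le.1) hsupp)
  have hdecay : (2 : ℝ) ^ (-α) < 2⁻¹ := by
    simpa [Real.rpow_neg_one] using
      Real.rpow_lt_rpow_of_exponent_lt one_lt_two (neg_lt_neg hα)
  obtain ⟨T, hT, r, hr, htail⟩ := exists_measure_Ioi_le_geometric hpos hdecay (hrv 2 two_pos)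
  have hint : Integrable id μ := integrable_id_of_measure_Ioi_le_geometric hnonneg hT hr htail
  have hmean : β * ∫ y, y ∂μ ≠ 0 := by
    refine mul_ne_zero hβ.ne' ((integral_pos_iff_support_of_nonneg_ae hnonneg hint).2 ?_).ne'
    exact (ENNReal.toReal_pos_iff.1 (hpos 0)).1.trans_le
      (measure_mono fun y (hy : 0 < y) ↦ hy.ne')
  have htrunc : Tendsto (fun t : ℝ ↦ ∫ y in Iic t, y ∂μ) atTop (𝓝 (∫ y, y ∂μ)) :=
    (aecover_Iic tendsto_id).integral_tendsto_of_countably_generated hint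
  have hratio := (tendsto_mul_setIntegral_Icc_one_sub_div_rpow_neg_sub_one hint hnonneg hz
    hβ.le).div (htrunc.const_mul β) hmean
  rw [div_self hmean] at hratio
  refine hratio.congr fun t ↦ ?_
  rw [Pi.div_apply, mul_right_comm β t⁻¹, div_mul_eq_div_div_swap _ (β * _), div_inv_eq_mul,
    mul_comm (∫ _ in Icc _ _, _ ∂μ)]
end

section
/- Let X have distribution F with F̄ ∈ RV_{-α}, α > 1, and finite mean μ. Then the p-expectile satisfies e_p(X) ~ (α-1)^{-1/α} F^{←}(p) as p ↑ 1, i.e., lim_{p↑1} e_p(X)/F^{←}(p) = (α-1)^{-1/α}. -/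
/-!
Karamata's theorem `∫_t^∞ F̄ ~ t F̄(t) / (α - 1)` follows from dominated convergence after the
substitution `s = t u`, a Potter bound `F̄(tu) ≤ C u^{-β} F̄(t)` (`1 < β < α`) supplying the
dominator. Since `E(X - e)₊ = ∫_e^∞ F̄`, the expectile equation then gives
`F̄(e_p) ~ (α - 1)(1 - p)`, while `F̄(F^←(p)) ≤ 1 - p < F̄(x)` for `x < F^←(p)`. Comparing `F̄` at
`e_p` and at multiples of `F^←(p)` through regular variation pins `e_p / F^←(p)` down to
`(α - 1)^{-1/α}`.
-/

open MeasureTheory Filter Set Topology ProbabilityTheory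

theorem integral_Ioi_div_mul_eq (g : ℝ → ℝ) {t : ℝ} (ht : 0 < t) :
    (∫ s in Ioi t, g s) / (t * g t) = ∫ u in Ioi 1, g (t * u) / g t := by
  rw [integral_div, integral_comp_mul_left_Ioi g 1 ht, mul_one, smul_eq_mul, div_mul_eq_div_div,
    inv_mul_eq_div]

def IsRegularlyVarying (g : ℝ → ℝ) (ρ : ℝ) : Prop :=
  ∀ x : ℝ, 0 < x → Tendsto (fun t => g (t * x) / g t) atTop (𝓝 (x ^ ρ))

namespace IsRegularlyVarying

variable {g : ℝ → ℝ} {α : ℝ}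

theorem potter_bound (hrv : IsRegularlyVarying g (-α)) (hg : Antitone g)
    (hpos : ∀ t, 0 < g t) {β : ℝ} (hβ : 0 ≤ β) (hβα : β < α) :
    ∀ᶠ t in atTop, ∀ u, 1 ≤ u → g (t * u) ≤ 2 ^ β * u ^ (-β) * g t := by
  have h2 : (2 : ℝ) ^ (-α) < 2 ^ (-β) := Real.rpow_lt_rpow_of_exponent_lt one_lt_two (by linarith)
  obtain ⟨T, hT⟩ := ((hrv 2 two_pos).eventually (eventually_lt_nhds h2)).exists_forall_of_atTop
  filter_upwards [eventually_ge_atTop T, eventually_gt_atTop 0] with t htT ht0 u hu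
  have hpow (n : ℕ) : g (t * 2 ^ n) ≤ (2 ^ (-β)) ^ n * g t := by
    induction n with
    | zero => simp
    | succ n ih =>
      have hTn : T ≤ t * 2 ^ n := htT.trans (le_mul_of_one_le_right ht0.le (one_le_pow₀ one_le_two))
      calc g (t * 2 ^ (n + 1)) = g (t * 2 ^ n * 2) := by ring_nf
        _ ≤ 2 ^ (-β) * g (t * 2 ^ n) := ((div_lt_iff₀ (hpos _)).1 (hT _ hTn)).le
        _ ≤ 2 ^ (-β) * ((2 ^ (-β)) ^ n * g t) := by gcongr
        _ = (2 ^ (-β)) ^ (n + 1) * g t := by ring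
  obtain ⟨n, hnu, hun⟩ := exists_nat_pow_near hu one_lt_two
  have hgeom : ((2 : ℝ) ^ (-β)) ^ n ≤ 2 ^ β * u ^ (-β) :=
    calc ((2 : ℝ) ^ (-β)) ^ n = 2 ^ β * ((2 : ℝ) ^ (n + 1) : ℝ) ^ (-β) := by
          rw [← Real.rpow_natCast, ← Real.rpow_natCast, ← Real.rpow_mul zero_le_two,
            ← Real.rpow_mul zero_le_two, ← Real.rpow_add two_pos]
          push_cast; ring_nf
      _ ≤ 2 ^ β * u ^ (-β) := by
          gcongr 2 ^ β * ?_
          exact Real.rpow_le_rpow_of_nonpos (zero_lt_one.trans_le hu) hun.le (by linarith)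
  calc g (t * u) ≤ g (t * 2 ^ n) := hg (by gcongr)
    _ ≤ (2 ^ (-β)) ^ n * g t := hpow n
    _ ≤ 2 ^ β * u ^ (-β) * g t := mul_le_mul_of_nonneg_right hgeom (hpos t).le

theorem tendsto_integral_Ioi_div (hrv : IsRegularlyVarying g (-α)) (hg : Antitone g)
    (hpos : ∀ t, 0 < g t) (hα : 1 < α) :
    Tendsto (fun t => (∫ s in Ioi t, g s) / (t * g t)) atTop (𝓝 (1 / (α - 1))) := by
  obtain ⟨β, hβ1, hβα⟩ := exists_between hα
  have hlim : ∫ u in Ioi (1 : ℝ), u ^ (-α) = 1 / (α - 1) := by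
    rw [integral_Ioi_rpow_of_lt (by linarith) one_pos, Real.one_rpow,
      show -α + 1 = -(α - 1) by ring, div_neg, neg_div, neg_neg]
  rw [← hlim]
  refine Tendsto.congr'
    (eventually_gt_atTop 0 |>.mono fun t ht => (integral_Ioi_div_mul_eq g ht).symm) ?_
  refine tendsto_integral_filter_of_dominated_convergence (fun u => 2 ^ β * u ^ (-β)) ?_ ?_ ?_ ?_
  · exact Eventually.of_forall fun t =>
      ((hg.measurable.comp (measurable_const_mul t)).div_const _).aestronglyMeasurable
  · filter_upwards [hrv.potter_bound hg hpos (by linarith) hβα] with t ht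
    refine ae_restrict_of_forall_mem measurableSet_Ioi fun u hu => ?_
    rw [Real.norm_of_nonneg (div_pos (hpos _) (hpos _)).le, div_le_iff₀ (hpos _)]
    exact ht u (le_of_lt hu)
  · exact (integrableOn_Ioi_rpow_of_lt (by linarith) one_pos).const_mul _
  · exact ae_restrict_of_forall_mem measurableSet_Ioi fun u hu => hrv u (zero_lt_one.trans hu)

section Inversion

variable {ι : Type*} {l : Filter ι} {x y w : ι → ℝ} {L : ℝ}

theorem eventually_le_mul (hrv : IsRegularlyVarying g (-α)) (hg : Antitone g)
    (hpos : ∀ t, 0 < g t) (hy : Tendsto y l atTop) (hyw : ∀ᶠ i in l, g (y i) ≤ w i)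
    (hx : Tendsto (fun i => g (x i) / w i) l (𝓝 L)) {d : ℝ} (hd : 0 < d) (hdL : d ^ (-α) < L) :
    ∀ᶠ i in l, x i ≤ y i * d := by
  obtain ⟨m, hdm, hmL⟩ := exists_between hdL
  filter_upwards [((hrv d hd).comp hy).eventually (eventually_lt_nhds hdm),
    hx.eventually (eventually_gt_nhds hmL), hyw] with i hyd hxw hyw
  by_contra! h
  have hw : 0 < w i := (hpos _).trans_le hyw
  have : g (x i) / w i < m :=
    calc g (x i) / w i ≤ g (y i * d) / w i := by gcongr; exact hg h.le
      _ ≤ g (y i * d) / g (y i) := div_le_div_of_nonneg_left (hpos _).le (hpos _) hyw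
      _ < m := hyd
  exact this.not_gt hxw

theorem eventually_mul_le (hrv : IsRegularlyVarying g (-α)) (hg : Antitone g)
    (hpos : ∀ t, 0 < g t) (hy : Tendsto y l atTop) (hw : ∀ᶠ i in l, 0 < w i)
    (hwy : ∀ᶠ i in l, ∀ s < y i, w i < g s)
    (hx : Tendsto (fun i => g (x i) / w i) l (𝓝 L)) {d θ : ℝ} (hd : 0 < d) (hθ : θ ∈ Ioo 0 1)
    (hLd : L < d ^ (-α)) :
    ∀ᶠ i in l, y i * θ * d ≤ x i := by
  obtain ⟨m, hLm, hmd⟩ := exists_between hLd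
  have hyθ := hy.atTop_mul_const hθ.1
  filter_upwards [((hrv d hd).comp hyθ).eventually (eventually_gt_nhds hmd),
    hx.eventually (eventually_lt_nhds hLm), hw, hwy, hy.eventually_gt_atTop 0]
    with i hyd hxw hw hwy hy0
  by_contra! h
  have hgθ : w i < g (y i * θ) := hwy _ (mul_lt_of_lt_one_right hy0 hθ.2)
  have : m < g (x i) / w i :=
    calc m < g (y i * θ * d) / g (y i * θ) := hyd
      _ ≤ g (y i * θ * d) / w i := div_le_div_of_nonneg_left (hpos _).le hw hgθ.le
      _ ≤ g (x i) / w i := by gcongr; exact hg h.le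
  exact this.not_gt hxw

theorem tendsto_div_rpow (hrv : IsRegularlyVarying g (-α)) (hg : Antitone g)
    (hpos : ∀ t, 0 < g t) (hα : 0 < α) (hL : 0 < L) (hy : Tendsto y l atTop)
    (hyw : ∀ᶠ i in l, g (y i) ≤ w i) (hwy : ∀ᶠ i in l, ∀ s < y i, w i < g s)
    (hx : Tendsto (fun i => g (x i) / w i) l (𝓝 L)) :
    Tendsto (fun i => x i / y i) l (𝓝 (L ^ (-(1 / α)))) := by
  have hexp : -(1 / α) = (-α)⁻¹ := by rw [inv_neg, one_div]
  have hc : 0 < L ^ (-(1 / α)) := Real.rpow_pos_of_pos hL _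
  have hw : ∀ᶠ i in l, 0 < w i := hyw.mono fun i h => (hpos _).trans_le h
  refine tendsto_order.2 ⟨fun a ha => ?_, fun b hb => ?_⟩
  · obtain ⟨d, had, hdc⟩ := exists_between (max_lt_iff.2 ⟨ha, hc⟩)
    have hd : 0 < d := (le_max_right a 0).trans_lt had
    obtain ⟨θ, haθ, hθ⟩ := exists_between ((div_lt_one hd).2 had)
    have hθ0 : 0 < θ := (div_nonneg (le_max_right a 0) hd.le).trans_lt haθ
    have hLd : L < d ^ (-α) := by
      rwa [hexp, Real.lt_rpow_inv_iff_of_neg hd hL (by linarith)] at hdc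
    filter_upwards [eventually_mul_le hrv hg hpos hy hw hwy hx hd ⟨hθ0, hθ⟩ hLd,
      hy.eventually_gt_atTop 0] with i hi hy0
    rw [lt_div_iff₀ hy0]
    calc a * y i ≤ max a 0 * y i := by gcongr; exact le_max_left a 0
      _ < y i * θ * d := by rw [div_lt_iff₀ hd] at haθ; nlinarith
      _ ≤ x i := hi
  · obtain ⟨d, hcd, hdb⟩ := exists_between hb
    have hd : 0 < d := hc.trans hcd
    have hdL : d ^ (-α) < L := by
      rwa [hexp, Real.rpow_inv_lt_iff_of_neg hL hd (by linarith)] at hcd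
    filter_upwards [eventually_le_mul hrv hg hpos hy hyw hx hd hdL,
      hy.eventually_gt_atTop 0] with i hi hy0
    rw [div_lt_iff₀ hy0]
    nlinarith

end Inversion
end IsRegularlyVarying

def IsExpectile (ν : Measure ℝ) (p e : ℝ) : Prop :=
  e - ∫ x, x ∂ν = ((2 * p - 1) / (1 - p)) * ∫ x, max (x - e) 0 ∂ν

section Expectile

variable {ν : Measure ℝ} [IsFiniteMeasure ν]

theorem integrable_max_sub_zero (hX : Integrable (fun x : ℝ => x) ν) (e : ℝ) :
    Integrable (fun x => max (x - e) 0) ν :=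
  (hX.sub (integrable_const e)).pos_part

theorem integral_max_sub_zero_eq_integral_Ioi (hX : Integrable (fun x : ℝ => x) ν) (e : ℝ) :
    ∫ x, max (x - e) 0 ∂ν = ∫ s in Ioi e, ν.real (Ioi s) := by
  rw [(integrable_max_sub_zero hX e).integral_eq_integral_meas_lt
    (Eventually.of_forall fun x => le_max_right _ _)]
  have hset : ∀ t ∈ Ioi (0 : ℝ), ν.real {x | t < max (x - e) 0} = ν.real (Ioi (t + e)) := by
    intro t ht
    have ht' : ¬t < 0 := not_lt.2 (le_of_lt ht)
    congr 1
    ext x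
    simp [ht', lt_sub_iff_add_lt]
  rw [setIntegral_congr_fun measurableSet_Ioi hset]
  have := (measurePreserving_add_right volume e).setIntegral_preimage_emb
    (MeasurableEquiv.addRight e).measurableEmbedding (fun s => ν.real (Ioi s)) (Ioi e)
  rwa [preimage_add_const_Ioi, sub_self] at this

theorem antitone_integral_max_sub_zero (hX : Integrable (fun x : ℝ => x) ν) :
    Antitone fun e => ∫ x, max (x - e) 0 ∂ν := fun _ _ hab =>
  integral_mono (integrable_max_sub_zero hX _) (integrable_max_sub_zero hX _)
    fun x => max_le_max (by linarith) le_rfl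

theorem integral_max_sub_zero_pos (hX : Integrable (fun x : ℝ => x) ν) {e : ℝ}
    (he : 0 < ν.real (Ioi e)) : 0 < ∫ x, max (x - e) 0 ∂ν := by
  have hsupp : Function.support (fun x : ℝ => max (x - e) 0) = Ioi e := by
    ext x; simp
  rw [integral_pos_iff_support_of_nonneg (f := fun x => max (x - e) 0) (fun x => le_max_right _ _)
    (integrable_max_sub_zero hX e), hsupp]
  exact pos_iff_ne_zero.2 ((measureReal_ne_zero_iff).1 he.ne')

theorem tendsto_two_mul_sub_one_nhdsLT_one : Tendsto (fun p : ℝ => 2 * p - 1) (𝓝[<] 1) (𝓝 1) :=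
  tendsto_nhdsWithin_of_tendsto_nhds <|
    (show Continuous fun p : ℝ => 2 * p - 1 by fun_prop).tendsto' 1 1 (by norm_num)

theorem tendsto_two_mul_sub_one_div_one_sub_atTop :
    Tendsto (fun p : ℝ => (2 * p - 1) / (1 - p)) (𝓝[<] 1) atTop := by
  have hden : Tendsto (fun p : ℝ => 1 - p) (𝓝[<] 1) (𝓝[>] 0) :=
    tendsto_nhdsWithin_iff.2 ⟨tendsto_nhdsWithin_of_tendsto_nhds <|
      (show Continuous fun p : ℝ => 1 - p by fun_prop).tendsto' 1 0 (sub_self 1),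
      eventually_nhdsWithin_of_forall fun p (hp : p < 1) => sub_pos.2 hp⟩
  exact tendsto_two_mul_sub_one_nhdsLT_one.pos_mul_atTop one_pos hden.inv_tendsto_nhdsGT_zero

variable {e : ℝ → ℝ}

theorem tendsto_expectile_atTop (hX : Integrable (fun x : ℝ => x) ν)
    (hν : ∀ t, 0 < ν.real (Ioi t))
    (he : ∀ p ∈ Ioo (0 : ℝ) 1, IsExpectile ν p (e p)) :
    Tendsto e (𝓝[<] 1) atTop := by
  refine tendsto_atTop.2 fun M => ?_
  have hUM := integral_max_sub_zero_pos hX (hν M)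
  have hcoef_top := tendsto_two_mul_sub_one_div_one_sub_atTop.atTop_mul_const hUM
  filter_upwards [hcoef_top.eventually_gt_atTop (M - ∫ x, x ∂ν),
    Ioo_mem_nhdsLT (show (1 / 2 : ℝ) < 1 by norm_num)] with p hp hp'
  by_contra! hlt
  have hcoef : 0 ≤ (2 * p - 1) / (1 - p) := div_nonneg (by linarith [hp'.1]) (by linarith [hp'.2])
  have hU := mul_le_mul_of_nonneg_left (antitone_integral_max_sub_zero hX hlt.le) hcoef
  have heq := he p ⟨by linarith [hp'.1], hp'.2⟩
  rw [IsExpectile] at heq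
  linarith

theorem tendsto_measureReal_Ioi_expectile_div (hX : Integrable (fun x : ℝ => x) ν)
    (hν : ∀ t, 0 < ν.real (Ioi t))
    (he : ∀ p ∈ Ioo (0 : ℝ) 1, IsExpectile ν p (e p))
    {κ : ℝ} (hκ : κ ≠ 0)
    (htail : Tendsto (fun t => (∫ s in Ioi t, ν.real (Ioi s)) / (t * ν.real (Ioi t))) atTop (𝓝 κ)) :
    Tendsto (fun p => ν.real (Ioi (e p)) / (1 - p)) (𝓝[<] 1) (𝓝 κ⁻¹) := by
  have he_top := tendsto_expectile_atTop hX hν he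
  have hmean : Tendsto (fun p => 1 - (∫ x, x ∂ν) / e p) (𝓝[<] 1) (𝓝 1) := by
    simpa using tendsto_const_nhds.sub (tendsto_const_nhds.div_atTop he_top)
  have := (((htail.comp he_top).inv₀ hκ).mul hmean).div tendsto_two_mul_sub_one_nhdsLT_one
    one_ne_zero
  rw [mul_one, div_one] at this
  refine this.congr' ?_
  filter_upwards [he_top.eventually_gt_atTop 0, Ioo_mem_nhdsLT (show (1 / 2 : ℝ) < 1 by norm_num)]
    with p hep hp
  have hU := integral_max_sub_zero_pos hX (hν (e p))
  have heq := he p ⟨by linarith [hp.1], hp.2⟩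
  rw [IsExpectile, integral_max_sub_zero_eq_integral_Ioi hX] at heq
  rw [integral_max_sub_zero_eq_integral_Ioi hX] at hU
  have h1p : 1 - p ≠ 0 := by linarith [hp.2]
  have h2p : 2 * p - 1 ≠ 0 := by linarith [hp.1]
  simp only [Pi.div_apply, Function.comp_apply, inv_div]
  rw [one_sub_div hep.ne', heq]
  field_simp

end Expectile

noncomputable def quantile (ν : Measure ℝ) (p : ℝ) : ℝ := sInf {x | p ≤ cdf ν x}

section Quantile

variable (ν : Measure ℝ) {p : ℝ}

theorem bddBelow_setOf_le_cdf (hp : 0 < p) : BddBelow {x | p ≤ cdf ν x} := by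
  obtain ⟨x₀, hx₀⟩ := ((tendsto_cdf_atBot ν).eventually (eventually_lt_nhds hp)).exists
  exact ⟨x₀, fun x hx => not_lt.1 fun hlt => (hx₀.trans_le hx).not_ge ((cdf ν).mono hlt.le)⟩

theorem nonempty_setOf_le_cdf (hp : p < 1) : {x | p ≤ cdf ν x}.Nonempty :=
  ((tendsto_cdf_atTop ν).eventually (eventually_ge_nhds hp)).exists

theorem cdf_lt_of_lt_quantile (hp : 0 < p) {x : ℝ} (hx : x < quantile ν p) : cdf ν x < p :=
  not_le.1 (notMem_of_lt_csInf (s := {x | p ≤ cdf ν x}) hx (bddBelow_setOf_le_cdf ν hp))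

theorem le_cdf_quantile (hp : p ∈ Ioo 0 1) : p ≤ cdf ν (quantile ν p) := by
  refine ge_of_tendsto ((cdf ν).right_continuous _ |>.mono Ioi_subset_Ici_self)
    (eventually_nhdsWithin_of_forall fun x hx => ?_)
  obtain ⟨s, hs, hsx⟩ := exists_lt_of_csInf_lt (nonempty_setOf_le_cdf ν hp.2) hx
  exact hs.trans ((cdf ν).mono hsx.le)

theorem tendsto_quantile_nhdsLT_one (h : ∀ x, cdf ν x < 1) :
    Tendsto (quantile ν) (𝓝[<] 1) atTop := by
  refine tendsto_atTop.2 fun M => ?_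
  filter_upwards [Ioo_mem_nhdsLT (h M)] with p hp
  refine le_csInf (nonempty_setOf_le_cdf ν hp.2) fun x hx => ?_
  by_contra! hxM
  exact (hp.1.trans_le hx).not_ge ((cdf ν).mono hxM.le)

end Quantile

theorem expectile_first_order_general (ν : Measure ℝ) [IsProbabilityMeasure ν]
    (α : ℝ) (hα : 1 < α) (hxint : Integrable (fun x : ℝ => x) ν)
    (hpos : ∀ t : ℝ, 0 < (ν (Ioi t)).toReal)
    (hrv : ∀ x : ℝ, 0 < x → Tendsto (fun t : ℝ =>
        (ν (Ioi (t * x))).toReal / (ν (Ioi t)).toReal) atTop (nhds (x ^ (-α))))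
    (e : ℝ → ℝ)
    (he : ∀ p ∈ Ioo (0 : ℝ) 1, e p - ∫ x, x ∂ν
      = ((2 * p - 1) / (1 - p)) * ∫ x, max (x - e p) 0 ∂ν) :
    Tendsto (fun p : ℝ => e p / sInf {x : ℝ | p ≤ (ν (Iic x)).toReal})
      (nhdsWithin 1 (Iio 1)) (nhds ((α - 1) ^ (-(1 / α)))) := by
  simp only [← measureReal_def, ← cdf_eq_real] at hpos hrv ⊢
  change Tendsto (fun p => e p / quantile ν p) _ _
  have hG_rv : IsRegularlyVarying (fun t => ν.real (Ioi t)) (-α) := hrv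
  have hG : Antitone fun t => ν.real (Ioi t) := fun _ _ hab => measureReal_mono (Ioi_subset_Ioi hab)
  have hGcdf (x : ℝ) : ν.real (Ioi x) = 1 - cdf ν x := by
    rw [cdf_eq_real, ← compl_Iic, probReal_compl_eq_one_sub measurableSet_Iic]
  have hratio := tendsto_measureReal_Ioi_expectile_div hxint hpos he (by positivity)
    (hG_rv.tendsto_integral_Ioi_div hG hpos hα)
  rw [one_div, inv_inv] at hratio
  refine hG_rv.tendsto_div_rpow hG hpos (by linarith) (by linarith)
    (tendsto_quantile_nhdsLT_one ν fun x => by linarith [hGcdf x, hpos x]) ?_ ?_ hratio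
  · filter_upwards [Ioo_mem_nhdsLT zero_lt_one] with p hp
    linarith [hGcdf (quantile ν p), le_cdf_quantile ν hp]
  · filter_upwards [Ioo_mem_nhdsLT zero_lt_one] with p hp s hs
    linarith [hGcdf s, cdf_lt_of_lt_quantile ν hp.1 hs]

/-- First-order asymptotics of the expectile: if `F̄ ∈ RV_{-α}` with `α > 1` and finite mean,
then `e_p(X) ~ (α-1)^{-1/α} F^{←}(p)` as `p ↑ 1`. -/
theorem expectile_first_order (ν : Measure ℝ) [IsProbabilityMeasure ν]
    (hsupp : ν (Iio 0) = 0)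
    (α : ℝ) (hα : 1 < α) (hxint : Integrable (fun x : ℝ => x) ν)
    (hpos : ∀ t : ℝ, 0 < (ν (Ioi t)).toReal)
    (hrv : ∀ x : ℝ, 0 < x → Tendsto (fun t : ℝ =>
        (ν (Ioi (t * x))).toReal / (ν (Ioi t)).toReal) atTop (nhds (x ^ (-α))))
    (e : ℝ → ℝ)
    (he : ∀ p ∈ Ioo (0 : ℝ) 1, e p - ∫ x, x ∂ν
      = ((2 * p - 1) / (1 - p)) * ∫ x, max (x - e p) 0 ∂ν) :
    Tendsto (fun p : ℝ => e p / sInf {x : ℝ | p ≤ (ν (Iic x)).toReal})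
      (nhdsWithin 1 (Iio 1)) (nhds ((α - 1) ^ (-(1 / α)))) :=
  expectile_first_order_general ν α hα hxint hpos hrv e he
end
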